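/- Deleting a loop preserves endpoint data: let γ : [0, L] → ℝ³ be a continuously differentiable unit-speed curve, and suppose 0 ≤ a < b ≤ L with γ(a) = γ(b) and γ'(a) = γ'(b). Define δ : [0, L − (b − a)] → ℝ³ by δ(t) = γ(t) for t ≤ a and δ(t) = γ(t + (b − a)) for t > a. Then δ is a continuously differentiable unit-speed curve with δ(0) = γ(0), δ'(0) = γ'(0), δ(L − (b − a)) = γ(L), and δ'(L − (b − a)) = γ'(L). -/

import Mathlib

open Set

/-- Deleting a loop preserves endpoint data: if a C¹ unit-speed curve `γ` on `[0, L]`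
has `γ(a) = γ(b)` and `γ'(a) = γ'(b)` for `0 ≤ a < b ≤ L`, then the curve obtained
by deleting the loop `[a, b]` is again C¹ unit-speed with the same initial and final
positions and directions. -/
theorem loop_deletion (L a b : ℝ) (ha : 0 ≤ a) (hab : a < b) (hb : b ≤ L)
    (γ v : ℝ → EuclideanSpace ℝ (Fin 3))
    (hderiv : ∀ t ∈ Icc (0 : ℝ) L, HasDerivAt γ (v t) t)
    (hv : ContinuousOn v (Icc 0 L))
    (hunit : ∀ t ∈ Icc (0 : ℝ) L, ‖v t‖ = 1)
    (hloop : γ a = γ b) (hloop' : v a = v b) :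
    let δ : ℝ → EuclideanSpace ℝ (Fin 3) := fun t => if t ≤ a then γ t else γ (t + (b - a))
    let w : ℝ → EuclideanSpace ℝ (Fin 3) := fun t => if t ≤ a then v t else v (t + (b - a))
    δ 0 = γ 0 ∧ w 0 = v 0 ∧ δ (L - (b - a)) = γ L ∧ w (L - (b - a)) = v L ∧
      (∀ t ∈ Icc (0 : ℝ) (L - (b - a)), HasDerivAt δ (w t) t ∧ ‖w t‖ = 1) ∧
      ContinuousOn w (Icc 0 (L - (b - a))) := by
  intro δ w
  have haL : a ∈ Icc (0:ℝ) L := ⟨ha, le_trans hab.le hb⟩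
  have hbL : b ∈ Icc (0:ℝ) L := ⟨by linarith, hb⟩
  have hsub : Icc (0:ℝ) (L - (b - a)) ⊆ Icc 0 L :=
    Icc_subset_Icc le_rfl (by linarith)
  have hmap : ∀ t ∈ Icc (0:ℝ) (L - (b - a)), t + (b - a) ∈ Icc (0:ℝ) L := by
    intro t ht
    exact ⟨by linarith [ht.1], by linarith [ht.2]⟩
  -- endpoint values
  refine ⟨if_pos ha, if_pos ha, ?_, ?_, ?_, ?_⟩
  · show (if L - (b - a) ≤ a then γ (L - (b - a)) else γ (L - (b - a) + (b - a))) = γ L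
    by_cases h : L - (b - a) ≤ a
    · have hL : L = b := le_antisymm (by linarith) hb
      have : L - (b - a) = a := by linarith
      rw [if_pos h, this, hloop, hL]
    · rw [if_neg h]; ring_nf
  · show (if L - (b - a) ≤ a then v (L - (b - a)) else v (L - (b - a) + (b - a))) = v L
    by_cases h : L - (b - a) ≤ a
    · have hL : L = b := le_antisymm (by linarith) hb
      have : L - (b - a) = a := by linarith
      rw [if_pos h, this, hloop', hL]
    · rw [if_neg h]; ring_nf
  · -- derivative and unit speed
    intro t ht
    have hnorm : ‖w t‖ = 1 := by
      show ‖if t ≤ a then v t else v (t + (b - a))‖ = 1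
      by_cases h : t ≤ a
      · rw [if_pos h]; exact hunit t (hsub ht)
      · rw [if_neg h]; exact hunit _ (hmap t ht)
    refine ⟨?_, hnorm⟩
    rcases lt_trichotomy t a with hlt | heq | hgt
    · have hw : w t = v t := if_pos hlt.le
      rw [hw]
      refine (hderiv t (hsub ht)).congr_of_eventuallyEq ?_
      filter_upwards [Iio_mem_nhds hlt] with s hs
      exact if_pos (le_of_lt hs)
    · subst heq
      have hw : w t = v t := if_pos le_rfl
      rw [hw]
      have hleft : HasDerivWithinAt δ (v t) (Iic t) t := by
        refine ((hderiv t (hsub ht)).hasDerivWithinAt).congr ?_ (if_pos le_rfl)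
        intro s hs
        exact if_pos hs
      have hright : HasDerivWithinAt δ (v t) (Ici t) t := by
        have hb' : HasDerivAt (fun s => γ (s + (b - t))) (v b) t := by
          have htb : t + (b - t) = b := by ring
          have h := HasDerivAt.comp_add_const t (b - t)
            (hderiv (t + (b - t)) (show t + (b - t) ∈ Icc 0 L by rw [htb]; exact hbL))
          simpa [htb] using h
        rw [hloop']
        refine hb'.hasDerivWithinAt.congr ?_ ?_
        · intro s hs
          rcases eq_or_lt_of_le (mem_Ici.mp hs) with heq' | hlt
          · subst heq'
            show δ t = γ (t + (b - t))
            have h1 : δ t = γ t := if_pos le_rfl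
            rw [h1, hloop, show t + (b - t) = b from by ring]
          · show δ s = γ (s + (b - t))
            exact if_neg (not_le.mpr hlt)
        · show δ t = γ (t + (b - t))
          have h1 : δ t = γ t := if_pos le_rfl
          rw [h1, hloop, show t + (b - t) = b from by ring]
      have := hleft.union hright
      rwa [Iic_union_Ici, hasDerivWithinAt_univ] at this
    · have hw : w t = v (t + (b - a)) := if_neg (not_le.mpr hgt)
      rw [hw]
      have hd : HasDerivAt (fun s => γ (s + (b - a))) (v (t + (b - a))) t :=
        HasDerivAt.comp_add_const t (b - a) (hderiv _ (hmap t ht))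
      refine hd.congr_of_eventuallyEq ?_
      filter_upwards [Ioi_mem_nhds hgt] with s hs
      exact if_neg (not_le.mpr hs)
  · -- continuity of w
    have h1 : ContinuousOn v (Icc 0 (L - (b - a))) := hv.mono hsub
    have h2 : ContinuousOn (fun t => v (t + (b - a))) (Icc 0 (L - (b - a))) := by
      refine hv.comp (by fun_prop) ?_
      intro t ht; exact hmap t ht
    show ContinuousOn (fun t => if t ≤ a then v t else v (t + (b - a))) (Icc 0 (L - (b - a)))
    refine ContinuousOn.if ?_ (h1.mono inter_subset_left) (h2.mono inter_subset_left) 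
    intro t ht
    have hta : t = a := by
      have := ht.2
      rw [show {x : ℝ | x ≤ a} = Iic a from rfl, frontier_Iic] at this
      exact this
    subst hta
    have : t + (b - t) = b := by ring
    simp only [this, hloop']
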